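/- Let S be an l-ECOC solution of G and (I,J,R) an ECOC crown decomposition. Let 𝒞₂ be the set of components of G[I] adjacent to J \ S and let T = V(𝒞') ∪ V(𝒞₂) where 𝒞' is the set of components of G − S meeting J \ S. Then every connected component of (G − S)[T \ S] contains a vertex of J \ S, hence the number of such components is at most |J \ S|, and consequently |S ∩ T| ≥ |T| − l·|J \ S|. -/

import Mathlib

/-!
A vertex of `T \ S` outside `V(𝒞')` lies in a component `C` of `G[I]` adjacent to some
`w ∈ J \ S`. Its component in `G - S` either stays inside `I`, and then, being connected of
size `l`, it is `C` and contains `w`; or it leaves `I`, which it can only do through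
`N(I) ⊆ J`. Hence `T \ S = V(𝒞')` is the union of the components of `G - S` through the
vertices of `J \ S`: at most `|J \ S|` components, each of size `l`.
-/

open SimpleGraph

variable {V : Type*}

/-- Every connected component of `G.induce X` has exactly `l` vertices. -/
def AllCompsSize (G : SimpleGraph V) (X : Set V) (l : ℕ) : Prop :=
  ∀ c : (G.induce X).ConnectedComponent, Nat.card c.supp = l

/-- `S` is an `l`-ECOC solution: every component of `G - S` has exactly `l` vertices. -/
def IsECOCSol (G : SimpleGraph V) (l : ℕ) (S : Set V) : Prop :=
  AllCompsSize G Sᶜ l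

/-- The (open) neighborhood of a set `X`. -/
def nbhd (G : SimpleGraph V) (X : Set V) : Set V :=
  {v | v ∉ X ∧ ∃ u ∈ X, G.Adj u v}

/-- ECOC crown decomposition. -/
def IsECOCCrown (G : SimpleGraph V) (l : ℕ) (I J R : Set V) : Prop :=
  (I ∪ J ∪ R = Set.univ) ∧ Disjoint I J ∧ Disjoint I R ∧ Disjoint J R ∧
  AllCompsSize G I l ∧
  (∀ u ∈ I, ∀ v ∈ R, ¬ G.Adj u v) ∧
  ∃ M : J → (G.induce I).ConnectedComponent, Function.Injective M ∧
    ∀ x : J, ∃ u ∈ (M x).supp, G.Adj (u : V) (x : V)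

/-- Strict ECOC crown decomposition. -/
def IsStrictECOCCrown (G : SimpleGraph V) (l : ℕ) (I J R : Set V) : Prop :=
  IsECOCCrown G l I J R ∧ I.Nonempty ∧
  Nat.card J + 1 ≤ Nat.card ((G.induce I).ConnectedComponent)

/-- `u` and `v` lie in `X` and in the same connected component of `G.induce X`. -/
def ReachIn (G : SimpleGraph V) (X : Set V) (u v : V) : Prop :=
  ∃ (hu : u ∈ X) (hv : v ∈ X), (G.induce X).Reachable ⟨u, hu⟩ ⟨v, hv⟩

/-- Feasibility for the LP relaxation WECOC-LP. -/
def LPFeasible (G : SimpleGraph V) (l : ℕ) (x : V → ℝ) : Prop :=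
  (∀ v, 0 ≤ x v ∧ x v ≤ 1) ∧
  ∀ C : Finset V, (G.induce (C : Set V)).Connected → C.card = l + 1 →
    1 ≤ ∑ v ∈ C, x v

/-- Alternating path w.r.t. a subgraph `M`: a path whose edges at even positions
are outside `M` and at odd positions are inside `M`. -/
def AltPath (G : SimpleGraph V) (M : G.Subgraph) {u v : V} (p : G.Walk u v) : Prop :=
  p.IsPath ∧ ∀ i : Fin p.edges.length, (p.edges.get i ∈ M.edgeSet ↔ Odd i.val)

namespace ReachIn

variable {G : SimpleGraph V} {X Y : Set V} {u v w : V}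

theorem iff_exists_walk : ReachIn G X u v ↔ ∃ p : G.Walk u v, ∀ x ∈ p.support, x ∈ X := by
  constructor
  · rintro ⟨hu, hv, ⟨q⟩⟩
    have hq : ∀ x ∈ (q.map (Embedding.induce X).toHom).support, x ∈ X := by
      rw [Walk.support_map]
      simp only [List.mem_map]
      rintro _ ⟨y, -, rfl⟩
      exact y.2
    exact ⟨_, hq⟩
  · rintro ⟨p, hp⟩
    exact ⟨hp u p.start_mem_support, hp v p.end_mem_support, ⟨p.induce X hp⟩⟩

theorem left_mem (h : ReachIn G X u v) : u ∈ X := h.1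

theorem right_mem (h : ReachIn G X u v) : v ∈ X := h.2.1

theorem symm (h : ReachIn G X u v) : ReachIn G X v u :=
  let ⟨hu, hv, hr⟩ := h
  ⟨hv, hu, hr.symm⟩

theorem trans (huv : ReachIn G X u v) (hvw : ReachIn G X v w) : ReachIn G X u w :=
  let ⟨hu, _, hr⟩ := huv
  let ⟨_, hw, hr'⟩ := hvw
  ⟨hu, hw, hr.trans hr'⟩

theorem of_adj (hu : u ∈ X) (hv : v ∈ X) (h : G.Adj u v) : ReachIn G X u v :=
  ⟨hu, hv, (show (G.induce X).Adj ⟨u, hu⟩ ⟨v, hv⟩ from h).reachable⟩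

theorem of_mem_support (p : G.Walk u v) (hp : ∀ x ∈ p.support, x ∈ X) {x : V}
    (hx : x ∈ p.support) : ReachIn G X u x := by
  classical
  exact iff_exists_walk.2
    ⟨p.takeUntil x hx, fun y hy => hp y (p.support_takeUntil_subset_support hx hy)⟩

theorem restrict (h : ReachIn G X u v) (hY : ∀ x, ReachIn G X u x → x ∈ Y) :
    ReachIn G Y u v := by
  obtain ⟨p, hp⟩ := iff_exists_walk.1 h
  exact iff_exists_walk.2 ⟨p, fun x hx => hY x (of_mem_support p hp hx)⟩

theorem exists_adj_exit {I : Set V} (h : ReachIn G X u v) (hu : u ∈ I) (hv : v ∉ I) :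
    ∃ x y, x ∈ I ∧ y ∉ I ∧ G.Adj x y ∧ ReachIn G X u y := by
  obtain ⟨p, hp⟩ := iff_exists_walk.1 h
  obtain ⟨d, hd, hdI, hdI'⟩ := p.exists_boundary_dart I hu hv
  exact ⟨d.fst, d.snd, hdI, hdI', d.adj,
    of_mem_support p hp (p.dart_snd_mem_support_of_mem_darts hd)⟩

end ReachIn

namespace AllCompsSize

variable {G : SimpleGraph V} {X Y : Set V} {l : ℕ} {u v : V}

theorem ncard_setOf_reachIn (h : AllCompsSize G X l) (hv : v ∈ X) :
    {u | ReachIn G X u v}.ncard = l := by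
  have : {u | ReachIn G X u v} =
      Subtype.val '' ((G.induce X).connectedComponentMk ⟨v, hv⟩).supp := by
    ext u
    simp [ReachIn, ConnectedComponent.eq, hv]
  rw [this, Set.ncard_image_of_injective _ Subtype.val_injective, ← Nat.card_coe_set_eq, h]

theorem ncard_setOf_reachIn_le (h : AllCompsSize G X l) (v : V) :
    {u | ReachIn G X u v}.ncard ≤ l := by
  by_cases hv : v ∈ X
  · exact (h.ncard_setOf_reachIn hv).le
  · have : {u | ReachIn G X u v} = ∅ :=
      Set.eq_empty_of_forall_notMem fun _ h => hv h.right_mem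
    simp [this]

theorem reachIn_of_comp_subset [Finite V] (hX : AllCompsSize G X l) (hY : AllCompsSize G Y l)
    (hv : v ∈ X) (hXY : ∀ x, ReachIn G X x v → x ∈ Y) (h : ReachIn G Y u v) :
    ReachIn G X u v := by
  have hsub : {x | ReachIn G X x v} ⊆ {x | ReachIn G Y x v} := fun x hx =>
    hx.restrict fun y hxy => hXY y (hxy.symm.trans hx)
  have heq := Set.eq_of_subset_of_ncard_le hsub
    (by rw [hX.ncard_setOf_reachIn hv, hY.ncard_setOf_reachIn h.right_mem]) (Set.toFinite _)
  change u ∈ {x | ReachIn G X x v}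
  rwa [heq]

end AllCompsSize

namespace IsECOCCrown

variable {G : SimpleGraph V} {l : ℕ} {I J R : Set V}

theorem allCompsSize (hc : IsECOCCrown G l I J R) : AllCompsSize G I l := hc.2.2.2.2.1

theorem mem_of_adj (hc : IsECOCCrown G l I J R) {u w : V} (hu : u ∈ I) (hw : w ∉ I)
    (h : G.Adj u w) : w ∈ J := by
  obtain ⟨hunion, -, -, -, -, hIR, -⟩ := hc
  have : w ∈ I ∪ J ∪ R := hunion ▸ Set.mem_univ w
  rcases this with (hwI | hwJ) | hwR
  · exact absurd hwI hw
  · exact hwJ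
  · exact absurd h (hIR u hu w hwR)

theorem exists_reachIn_of_adj [Finite V] (hc : IsECOCCrown G l I J R) {X : Set V}
    (hX : AllCompsSize G X l) {u v w : V} (hv : v ∈ X) (hvu : ReachIn G I v u)
    (huw : G.Adj u w) (hwX : w ∈ X) (hwJ : w ∈ J) : ∃ b ∈ J, ReachIn G X v b := by
  by_cases hsub : ∀ x, ReachIn G X x v → x ∈ I
  · have hu : ReachIn G X u v := hX.reachIn_of_comp_subset hc.allCompsSize hv hsub hvu.symm
    exact ⟨w, hwJ, hu.symm.trans (.of_adj hu.left_mem hwX huw)⟩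
  · push Not at hsub
    obtain ⟨d, hdv, hdI⟩ := hsub
    obtain ⟨x, y, hxI, hyI, hxy, hvy⟩ := hdv.symm.exists_adj_exit hvu.left_mem hdI
    exact ⟨y, hc.mem_of_adj hxI hyI hxy, hvy⟩

end IsECOCCrown

section Covering

variable {G : SimpleGraph V} {X A : Set V}

theorem exists_mem_supp_of_setOf_reachIn
    (c : (G.induce {v | ∃ w ∈ A, ReachIn G X v w}).ConnectedComponent) :
    ∃ v ∈ c.supp, (v : V) ∈ A := by
  induction c using ConnectedComponent.ind with
  | h v =>
    obtain ⟨v, w, hwA, hvw⟩ := v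
    obtain ⟨_, hw, hr⟩ := hvw.restrict (Y := {v | ∃ w ∈ A, ReachIn G X v w})
      fun x hvx => ⟨w, hwA, hvx.symm.trans hvw⟩
    exact ⟨⟨w, hw⟩, ConnectedComponent.sound hr.symm, hwA⟩

theorem card_connectedComponent_induce_le [Finite A]
    (h : ∀ c : (G.induce X).ConnectedComponent, ∃ v ∈ c.supp, (v : V) ∈ A) :
    Nat.card (G.induce X).ConnectedComponent ≤ Nat.card A := by
  choose f hfc hfA using h
  refine Nat.card_le_card_of_injective (fun c => ⟨f c, hfA c⟩) fun c c' hcc' => ?_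
  have hf : f c = f c' := by simpa [Subtype.ext_iff] using hcc'
  exact ConnectedComponent.eq_of_common_vertex (hfc c) (hf ▸ hfc c')

theorem AllCompsSize.ncard_setOf_reachIn_le_mul {l : ℕ} (hX : AllCompsSize G X l)
    (hA : A.Finite) : {v | ∃ w ∈ A, ReachIn G X v w}.ncard ≤ l * A.ncard := by
  have hunion : {v | ∃ w ∈ A, ReachIn G X v w} = ⋃ w ∈ hA.toFinset, {v | ReachIn G X v w} := by
    ext
    simp
  calc {v | ∃ w ∈ A, ReachIn G X v w}.ncard
      ≤ ∑ w ∈ hA.toFinset, {v | ReachIn G X v w}.ncard :=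
        hunion ▸ Finset.set_ncard_biUnion_le _ _
    _ ≤ ∑ _w ∈ hA.toFinset, l := Finset.sum_le_sum fun w _ => hX.ncard_setOf_reachIn_le w
    _ = l * A.ncard := by
        rw [Finset.sum_const, smul_eq_mul, Set.ncard_eq_toFinset_card _ hA, mul_comm]

end Covering

theorem stmt9_general [Fintype V] (G : SimpleGraph V) (l : ℕ)
    (S : Set V) (hS : IsECOCSol G l S)
    (I J R : Set V) (hcrown : IsECOCCrown G l I J R)
    (VC2 : Set V) (hVC2 : VC2 = {v | ∃ u w, ReachIn G I v u ∧ G.Adj u w ∧ w ∈ J \ S})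
    (VC' : Set V) (hVC' : VC' = {v | ∃ w ∈ J \ S, ReachIn G Sᶜ v w})
    (T : Set V) (hT : T = VC' ∪ VC2) :
    (∀ c : (G.induce (T \ S)).ConnectedComponent, ∃ v ∈ c.supp, (v : V) ∈ J \ S) ∧
    Nat.card ((G.induce (T \ S)).ConnectedComponent) ≤ Nat.card (J \ S : Set V) ∧
    Nat.card T ≤ Nat.card (S ∩ T : Set V) + l * Nat.card (J \ S : Set V) := by
  have hTS : T \ S = {v | ∃ w ∈ J \ S, ReachIn G Sᶜ v w} := by
    subst hT hVC' hVC2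
    refine Set.Subset.antisymm ?_ fun v hv => ⟨Or.inl hv, ?_⟩
    · rintro v ⟨hv | ⟨u, w, hvu, huw, hwJ, hwS⟩, hvS⟩
      · exact hv
      · obtain ⟨b, hbJ, hvb⟩ := hcrown.exists_reachIn_of_adj hS hvS hvu huw hwS hwJ
        exact ⟨b, ⟨hbJ, hvb.right_mem⟩, hvb⟩
    · obtain ⟨w, -, hvw⟩ := hv
      exact hvw.left_mem
  have hcomp : ∀ c : (G.induce (T \ S)).ConnectedComponent, ∃ v ∈ c.supp, (v : V) ∈ J \ S := by
    rw [hTS]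
    exact exists_mem_supp_of_setOf_reachIn
  refine ⟨hcomp, card_connectedComponent_induce_le hcomp, ?_⟩
  simp only [Nat.card_coe_set_eq]
  calc T.ncard = (S ∩ T).ncard + (T \ S).ncard := by
        rw [Set.inter_comm, Set.ncard_inter_add_ncard_sdiff_eq_ncard]
    _ ≤ (S ∩ T).ncard + l * (J \ S).ncard := by
        rw [hTS]
        exact Nat.add_le_add_left (AllCompsSize.ncard_setOf_reachIn_le_mul hS (Set.toFinite _)) _

theorem stmt9 [Fintype V] (G : SimpleGraph V) (l : ℕ) (hl : 1 ≤ l)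
    (S : Set V) (hS : IsECOCSol G l S)
    (I J R : Set V) (hcrown : IsECOCCrown G l I J R)
    (VC2 : Set V) (hVC2 : VC2 = {v | ∃ u w, ReachIn G I v u ∧ G.Adj u w ∧ w ∈ J \ S})
    (VC' : Set V) (hVC' : VC' = {v | ∃ w ∈ J \ S, ReachIn G Sᶜ v w})
    (T : Set V) (hT : T = VC' ∪ VC2) :
    (∀ c : (G.induce (T \ S)).ConnectedComponent, ∃ v ∈ c.supp, (v : V) ∈ J \ S) ∧
    Nat.card ((G.induce (T \ S)).ConnectedComponent) ≤ Nat.card (J \ S : Set V) ∧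
    Nat.card T ≤ Nat.card (S ∩ T : Set V) + l * Nat.card (J \ S : Set V) :=
  stmt9_general G l S hS I J R hcrown VC2 hVC2 VC' hVC' T hT
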